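/- arXiv:1410.6173 — 2 statements merged into one kernel-verified Lean document; each statement's English description precedes it below -/
import Mathlib

section
/- Let a,b,c,p,q,r ∈ ℝ and let [·,·] be the unique antisymmetric bilinear bracket on ℝ⁶ with basis e₁,…,e₆ determined by: [e₃,e₅] = −a e₁ − q e₂; [e₃,e₆] = [e₄,e₅] = −c e₁ − r e₂; [e₄,e₆] = −b e₁ − p e₂; [e₁,e₅] = a e₃ + q e₄; [e₁,e₆] = [e₂,e₅] = c e₃ + r e₄; [e₂,e₆] = b e₃ + p e₄; [e₁,e₃] = −a e₅ − q e₆; [e₁,e₄] = [e₂,e₃] = −c e₅ − r e₆; [e₂,e₄] = −b e₅ − p e₆; [e₁,e₂] = [e₃,e₄] = [e₅,e₆] = 0. Then [·,·] satisfies the Jacobi identity if and only if bq − cr = 0, ab − br − c² + cp = 0 and ar − cq + pq − r² = 0, and this holds if and only if the 2×3 real matrix with rows (a−r, c, q) and (c−p, b, r) has rank at most 1. -/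
/-!
Each component of the Jacobiator `J(u,v,w) = [[u,v],w] + [[v,w],u] + [[w,u],v]` of `brABC` is a
combination of the three relation polynomials `bq − cr`, `ab − br − c² + cp`, `ar − cq + pq − r²`
with alternating trilinear forms `eⁱ∧eʲ∧eᵏ` as coefficients (this is `d∘d` written out). So the
relations give the Jacobi identity, and evaluating `J` on suitable basis triples recovers each
relation. The three relations are, up to sign, the `2×2` minors of `!![a - r, c, q; c - p, b, r]`,
and a two-row matrix has rank at most one iff its rows are dependent iff all its `2×2` minors vanish.
-/

noncomputable section

/-- `Wpair i j v w = vᵢwⱼ − vⱼwᵢ`, the evaluation of `eⁱ∧eʲ` on `(v,w)`. -/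
def Wpair (i j : Fin 6) (v w : Fin 6 → ℝ) : ℝ := v i * w j - v j * w i

/-- The unique antisymmetric bilinear bracket on `ℝ⁶` with the basis brackets
`[e₃,e₅] = −a e₁ − q e₂`, `[e₃,e₆] = [e₄,e₅] = −c e₁ − r e₂`, `[e₄,e₆] = −b e₁ − p e₂`,
`[e₁,e₅] = a e₃ + q e₄`, `[e₁,e₆] = [e₂,e₅] = c e₃ + r e₄`, `[e₂,e₆] = b e₃ + p e₄`,
`[e₁,e₃] = −a e₅ − q e₆`, `[e₁,e₄] = [e₂,e₃] = −c e₅ − r e₆`, `[e₂,e₄] = −b e₅ − p e₆`,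
`[e₁,e₂] = [e₃,e₄] = [e₅,e₆] = 0` (indices here are 1-based, the code is 0-based). -/
def brABC (a b c p q r : ℝ) (v w : Fin 6 → ℝ) : Fin 6 → ℝ :=
  ![-(a * Wpair 2 4 v w) - c * (Wpair 2 5 v w + Wpair 3 4 v w) - b * Wpair 3 5 v w,
    -(q * Wpair 2 4 v w) - r * (Wpair 2 5 v w + Wpair 3 4 v w) - p * Wpair 3 5 v w,
    a * Wpair 0 4 v w + c * (Wpair 0 5 v w + Wpair 1 4 v w) + b * Wpair 1 5 v w,
    q * Wpair 0 4 v w + r * (Wpair 0 5 v w + Wpair 1 4 v w) + p * Wpair 1 5 v w,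
    -(a * Wpair 0 2 v w) - c * (Wpair 0 3 v w + Wpair 1 2 v w) - b * Wpair 1 3 v w,
    -(q * Wpair 0 2 v w) - r * (Wpair 0 3 v w + Wpair 1 2 v w) - p * Wpair 1 3 v w]

section RankTwoRows

variable {K n : Type*} [Field K]

theorem linearIndependent_pair_iff_exists_mul_sub_mul_ne_zero (x y : n → K) :
    LinearIndependent K ![x, y] ↔ ∃ i j, x i * y j - x j * y i ≠ 0 := by
  constructor
  · intro hxy
    by_contra! hminor
    have hx : x ≠ 0 := hxy.ne_zero 0
    obtain ⟨k, hk⟩ := Function.ne_iff.1 hx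
    have hdep : y k • x + (-x k) • y = 0 := by
      funext i
      simp only [Pi.add_apply, Pi.smul_apply, smul_eq_mul, Pi.zero_apply]
      linear_combination hminor i k
    exact hk (neg_eq_zero.1 (LinearIndependent.pair_iff.1 hxy _ _ hdep).2)
  · rintro ⟨i, j, hij⟩
    refine LinearIndependent.pair_iff.2 fun s t hst => ?_
    have hi : s * x i + t * y i = 0 := by simpa using congrFun hst i
    have hj : s * x j + t * y j = 0 := by simpa using congrFun hst j
    constructor
    · refine (mul_eq_zero.1 ?_).resolve_right hij
      linear_combination y j * hi - y i * hj
    · refine (mul_eq_zero.1 ?_).resolve_right hij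
      linear_combination x i * hj - x j * hi

theorem Matrix.one_lt_rank_iff_linearIndependent_row [Fintype n] (M : Matrix (Fin 2) n K) :
    1 < M.rank ↔ LinearIndependent K M.row := by
  refine ⟨fun h => ?_, fun h => by rw [h.rank_matrix, Fintype.card_fin]; exact one_lt_two⟩
  have hrank : M.rank = 2 :=
    le_antisymm (M.rank_le_card_height.trans_eq (Fintype.card_fin 2)) h
  rw [linearIndependent_iff_card_eq_finrank_span, Fintype.card_fin, Set.finrank,
    ← M.rank_eq_finrank_span_row, hrank]

theorem Matrix.rank_le_one_iff_forall_mul_sub_mul_eq_zero [Fintype n] (M : Matrix (Fin 2) n K) :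
    M.rank ≤ 1 ↔ ∀ i j, M 0 i * M 1 j - M 0 j * M 1 i = 0 := by
  have hrow : M.row = ![M 0, M 1] := by
    funext i
    fin_cases i <;> rfl
  rw [← not_lt, M.one_lt_rank_iff_linearIndependent_row, hrow,
    linearIndependent_pair_iff_exists_mul_sub_mul_ne_zero]
  simp only [not_exists, not_not]

end RankTwoRows

/-- `(eⁱ∧eʲ∧eᵏ)(u,v,w)`, expanded along `u`. -/
def Wtriple (i j k : Fin 6) (u v w : Fin 6 → ℝ) : ℝ :=
  u i * Wpair j k v w - u j * Wpair i k v w + u k * Wpair i j v w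

theorem brABC_jacobiator (a b c p q r : ℝ) (u v w : Fin 6 → ℝ) :
    brABC a b c p q r (brABC a b c p q r u v) w +
        brABC a b c p q r (brABC a b c p q r v w) u +
        brABC a b c p q r (brABC a b c p q r w u) v =
      ![-(b * q - c * r) * (Wtriple 0 4 5 u v w + Wtriple 0 2 3 u v w) +
          (a * b - b * r - c ^ 2 + c * p) * (Wtriple 1 4 5 u v w + Wtriple 1 2 3 u v w),
        (b * q - c * r) * (Wtriple 1 4 5 u v w + Wtriple 1 2 3 u v w) -
          (a * r - c * q + p * q - r ^ 2) * (Wtriple 0 4 5 u v w + Wtriple 0 2 3 u v w),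
        -(b * q - c * r) * (Wtriple 2 4 5 u v w + Wtriple 0 1 2 u v w) +
          (a * b - b * r - c ^ 2 + c * p) * (Wtriple 3 4 5 u v w + Wtriple 0 1 3 u v w),
        (b * q - c * r) * (Wtriple 3 4 5 u v w + Wtriple 0 1 3 u v w) -
          (a * r - c * q + p * q - r ^ 2) * (Wtriple 2 4 5 u v w + Wtriple 0 1 2 u v w),
        -(b * q - c * r) * (Wtriple 2 3 4 u v w + Wtriple 0 1 4 u v w) +
          (a * b - b * r - c ^ 2 + c * p) * (Wtriple 2 3 5 u v w + Wtriple 0 1 5 u v w),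
        (b * q - c * r) * (Wtriple 2 3 5 u v w + Wtriple 0 1 5 u v w) -
          (a * r - c * q + p * q - r ^ 2) * (Wtriple 2 3 4 u v w + Wtriple 0 1 4 u v w)] := by
  funext i
  fin_cases i <;>
    simp only [Pi.add_apply, brABC, Wtriple, Wpair, Matrix.cons_val, Matrix.cons_val_zero,
      Matrix.cons_val_one, Fin.zero_eta, Fin.mk_one, Fin.reduceFinMk] <;>
    ring

theorem brABC_jacobi_iff (a b c p q r : ℝ) :
    (∀ u v w : Fin 6 → ℝ,
        brABC a b c p q r (brABC a b c p q r u v) w +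
          brABC a b c p q r (brABC a b c p q r v w) u +
          brABC a b c p q r (brABC a b c p q r w u) v = 0) ↔
      (b * q - c * r = 0 ∧ a * b - b * r - c ^ 2 + c * p = 0 ∧
        a * r - c * q + p * q - r ^ 2 = 0) := by
  simp only [brABC_jacobiator]
  constructor
  · intro hJ
    -- `(e₄, e₀, e₅)` rather than `(e₀, e₄, e₅)`, so that the third relation appears with sign `+`
    have J₄₀₅ := hJ ![0, 0, 0, 0, 1, 0] ![1, 0, 0, 0, 0, 0] ![0, 0, 0, 0, 0, 1]
    have J₁₄₅ := hJ ![0, 1, 0, 0, 0, 0] ![0, 0, 0, 0, 1, 0] ![0, 0, 0, 0, 0, 1]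
    refine ⟨?_, ?_, ?_⟩
    · simpa [Wtriple, Wpair] using congrFun J₁₄₅ 1
    · simpa [Wtriple, Wpair] using congrFun J₁₄₅ 0
    · simpa [Wtriple, Wpair] using congrFun J₄₀₅ 1
  · rintro ⟨h₁, h₂, h₃⟩ u v w
    simp [h₁, h₂, h₃]

theorem rank_brABC_matrix_le_one_iff (a b c p q r : ℝ) :
    (!![a - r, c, q; c - p, b, r] : Matrix (Fin 2) (Fin 3) ℝ).rank ≤ 1 ↔
      (b * q - c * r = 0 ∧ a * b - b * r - c ^ 2 + c * p = 0 ∧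
        a * r - c * q + p * q - r ^ 2 = 0) := by
  rw [Matrix.rank_le_one_iff_forall_mul_sub_mul_eq_zero]
  constructor
  · intro h
    have h₀₁ : (a - r) * b - c * (c - p) = 0 := h 0 1
    have h₀₂ : (a - r) * r - q * (c - p) = 0 := h 0 2
    have h₁₂ : c * r - q * b = 0 := h 1 2
    exact ⟨by linear_combination -h₁₂, by linear_combination h₀₁, by linear_combination h₀₂⟩
  · rintro ⟨h₁, h₂, h₃⟩ i j
    fin_cases i <;> fin_cases j <;>
      simp only [Fin.zero_eta, Fin.mk_one, Fin.reduceFinMk, Matrix.of_apply, Matrix.cons_val',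
        Matrix.cons_val, Matrix.cons_val_zero, Matrix.cons_val_one, Matrix.cons_val_fin_one] <;>
      linarith

theorem stmt1 (a b c p q r : ℝ) :
    ((∀ u v w : Fin 6 → ℝ,
        brABC a b c p q r (brABC a b c p q r u v) w +
          brABC a b c p q r (brABC a b c p q r v w) u +
          brABC a b c p q r (brABC a b c p q r w u) v = 0) ↔
      (b * q - c * r = 0 ∧ a * b - b * r - c ^ 2 + c * p = 0 ∧
        a * r - c * q + p * q - r ^ 2 = 0)) ∧
    ((b * q - c * r = 0 ∧ a * b - b * r - c ^ 2 + c * p = 0 ∧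
        a * r - c * q + p * q - r ^ 2 = 0) ↔
      (!![a - r, c, q; c - p, b, r] : Matrix (Fin 2) (Fin 3) ℝ).rank ≤ 1) :=
  ⟨brABC_jacobi_iff a b c p q r, (rank_brABC_matrix_le_one_iff a b c p q r).symm⟩
end
end

section
/- For (λ₁,λ₂,λ₃,λ₄) ∈ ℝ⁴ and (μ₁,μ₂) ∈ ℝ², let Q_{λ,μ} be the 2×3 real matrix with rows (−(2/3)λ₂ + (1/2)μ₁, −(1/3)λ₃ + (1/2)μ₂, λ₁) and (−(2/3)λ₃ − (1/2)μ₂, −λ₄, (1/3)λ₂ + (1/2)μ₁). Then Q_{λ,μ} has rank at most 1 if and only if there exist (x₁,x₂) ∈ ℝ² and (y₁,y₂,y₃) ∈ ℝ³ such that λ₁ = x₁y₁, λ₂ = x₁y₂+x₂y₁, λ₃ = x₁y₃+x₂y₂, λ₄ = x₂y₃, μ₁ = (2/3)(2x₂y₁−x₁y₂) and μ₂ = (2/3)(x₂y₂−2x₁y₃). -/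
/-! The substitution `λ₁ = x₁y₁, …, μ₂ = (2/3)(x₂y₂ − 2x₁y₃)` turns `Q_{λ,μ}` into the outer product
`(x₁, x₂)ᵀ (−y₂, −y₃, y₁)`, and `(λ, μ) ↦ Q_{λ,μ}` is a linear isomorphism `ℝ⁶ ≃ Mat₂ₓ₃(ℝ)`.
A matrix has rank at most one exactly when it is an outer product `u vᵀ`, and by injectivity
`Q_{λ,μ} = u vᵀ` forces `(λ, μ)` to be the parameters at `x = u`, `y = (v₂, −v₀, −v₁)`. -/

noncomputable section

/-- The matrix `Q_{λ,μ}` cutting out the invariant torsion variety. -/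
def Qlm (l1 l2 l3 l4 m1 m2 : ℝ) : Matrix (Fin 2) (Fin 3) ℝ :=
  !![-(2 / 3) * l2 + 1 / 2 * m1, -(1 / 3) * l3 + 1 / 2 * m2, l1;
     -(2 / 3) * l3 - 1 / 2 * m2, -l4, 1 / 3 * l2 + 1 / 2 * m1]

open Matrix

theorem Matrix.rank_le_one_iff_exists_eq_vecMulVec {K m n : Type*} [Field K] [Finite m]
    [Fintype n] (A : Matrix m n K) : A.rank ≤ 1 ↔ ∃ u v, A = vecMulVec u v := by
  constructor
  · intro hA
    rw [rank_eq_finrank_span_cols, Submodule.finrank_le_one_iff_isPrincipal] at hA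
    obtain ⟨u, hu⟩ := hA.principal
    have hcol : ∀ j, ∃ c : K, c • u = A.col j := fun j =>
      Submodule.mem_span_singleton.mp (hu ▸ Submodule.subset_span ⟨j, rfl⟩)
    choose v hv using hcol
    refine ⟨u, v, ext fun i j => ?_⟩
    rw [vecMulVec_apply, mul_comm, ← smul_eq_mul, ← Pi.smul_apply, hv j, col_apply]
  · rintro ⟨u, v, rfl⟩
    exact rank_vecMulVec_le u v

theorem Qlm_eq_Qlm_iff {l1 l2 l3 l4 m1 m2 l1' l2' l3' l4' m1' m2' : ℝ} :
    Qlm l1 l2 l3 l4 m1 m2 = Qlm l1' l2' l3' l4' m1' m2' ↔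
      l1 = l1' ∧ l2 = l2' ∧ l3 = l3' ∧ l4 = l4' ∧ m1 = m1' ∧ m2 = m2' := by
  constructor
  · intro h
    have e : ∀ i j, Qlm l1 l2 l3 l4 m1 m2 i j = Qlm l1' l2' l3' l4' m1' m2' i j := by
      simp [h]
    have e00 := e 0 0; have e01 := e 0 1; have e02 := e 0 2
    have e10 := e 1 0; have e11 := e 1 1; have e12 := e 1 2
    simp only [Qlm, of_apply, cons_val', cons_val_zero, cons_val_one, cons_val_two,
      empty_val', cons_val_fin_one, head_cons, tail_cons] at e00 e01 e02 e10 e11 e12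
    exact ⟨e02, by linear_combination e12 - e00, by linear_combination -e01 - e10,
      by linear_combination -e11, by linear_combination (4 / 3) * e12 + (2 / 3) * e00,
      by linear_combination (4 / 3) * e01 - (2 / 3) * e10⟩
  · rintro ⟨rfl, rfl, rfl, rfl, rfl, rfl⟩
    rfl

theorem Qlm_parameterization (x1 x2 y1 y2 y3 : ℝ) :
    Qlm (x1 * y1) (x1 * y2 + x2 * y1) (x1 * y3 + x2 * y2) (x2 * y3)
        (2 / 3 * (2 * x2 * y1 - x1 * y2)) (2 / 3 * (x2 * y2 - 2 * x1 * y3)) =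
      vecMulVec ![x1, x2] ![-y2, -y3, y1] := by
  ext i j
  fin_cases i <;> fin_cases j <;> simp [Qlm, vecMulVec_apply] <;> ring

theorem stmt4 (l1 l2 l3 l4 m1 m2 : ℝ) :
    (Qlm l1 l2 l3 l4 m1 m2).rank ≤ 1 ↔
      ∃ x1 x2 y1 y2 y3 : ℝ,
        l1 = x1 * y1 ∧ l2 = x1 * y2 + x2 * y1 ∧ l3 = x1 * y3 + x2 * y2 ∧ l4 = x2 * y3 ∧
          m1 = 2 / 3 * (2 * x2 * y1 - x1 * y2) ∧ m2 = 2 / 3 * (x2 * y2 - 2 * x1 * y3) := by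
  rw [rank_le_one_iff_exists_eq_vecMulVec]
  constructor
  · rintro ⟨u, v, hQ⟩
    refine ⟨u 0, u 1, v 2, -v 0, -v 1, Qlm_eq_Qlm_iff.mp ?_⟩
    rw [hQ, Qlm_parameterization]
    ext i j
    fin_cases i <;> fin_cases j <;> simp [vecMulVec_apply]
  · rintro ⟨x1, x2, y1, y2, y3, rfl, rfl, rfl, rfl, rfl, rfl⟩
    exact ⟨_, _, Qlm_parameterization x1 x2 y1 y2 y3⟩
end
end
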